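/- arXiv:1812.01502 — 2 statements merged into one kernel-verified Lean document; each statement's English description precedes it below -/
import Mathlib

section
/- For m = 2^S and N = mM, the ordered product A_S · A_{S-1} ⋯ A_1 of the matrices A_s := I_{2^{S-s}} ⊗ (1/2)J_2 ⊗ I_{2^{s-1}} ⊗ (1/M)J_M equals (1/N)·J_N, the N×N matrix with all entries equal to 1/N. -/
/-
Write `C_k := I_{2^{S-k}} ⊗ (1/2^k)J_{2^k} ⊗ (1/M)J_M` (`Cmat` below). Each of the matrices
`(1/n)J_n` is the averaging projection over its index set; these are idempotent and closed under
Kronecker products. After regrouping the indices of `C_k` and `C_{k+1}` so that they match the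
Kronecker structure of `A_{k+1}`, the mixed-product property gives `A_{k+1} C_k = C_{k+1}`; with
`C_1 = A_1` this shows `A_k ⋯ A_1 = C_k`, and `C_S` is the averaging matrix over all `N` indices.
-/

open Matrix Kronecker

noncomputable def J (k : ℕ) : Matrix (Fin k) (Fin k) ℝ := Matrix.of fun _ _ => 1

/-- The matrix `A_s := I_{2^{S-s}} ⊗ (1/2)J_2 ⊗ I_{2^{s-1}} ⊗ (1/M)J_M`
on the product index type. -/
noncomputable def Akron (S M s : ℕ) :
    Matrix (((Fin (2^(S-s)) × Fin 2) × Fin (2^(s-1))) × Fin M)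
           (((Fin (2^(S-s)) × Fin 2) × Fin (2^(s-1))) × Fin M) ℝ :=
  (((1 : Matrix (Fin (2^(S-s))) (Fin (2^(S-s))) ℝ) ⊗ₖ ((1/2 : ℝ) • J 2)) ⊗ₖ
      (1 : Matrix (Fin (2^(s-1))) (Fin (2^(s-1))) ℝ)) ⊗ₖ ((1/(M:ℝ)) • J M)

/-- Flattening equivalence for a triple Kronecker product (row-major order). -/
def bEquiv (a b c : ℕ) : (Fin a × Fin b) × Fin c ≃ Fin (a * b * c) :=
  (finProdFinEquiv.prodCongr (Equiv.refl (Fin c))).trans finProdFinEquiv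

/-- Flattening equivalence for a fourfold Kronecker product (row-major order). -/
def aEquiv (a b c d : ℕ) : ((Fin a × Fin b) × Fin c) × Fin d ≃ Fin (a * b * c * d) :=
  ((bEquiv a b c).prodCongr (Equiv.refl (Fin d))).trans finProdFinEquiv

lemma size_eq (S s M : ℕ) (h1 : 1 ≤ s) (h2 : s ≤ S) :
    2^(S-s) * 2 * 2^(s-1) * M = 2^S * M := by
  have hS : S - s + (s - 1) + 1 = S := by omega
  calc 2^(S-s) * 2 * 2^(s-1) * M = (2^(S-s) * 2^(s-1) * 2^1) * M := by ring
    _ = 2^(S - s + (s-1) + 1) * M := by rw [pow_add, pow_add]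
    _ = 2^S * M := by rw [hS]

/-- The matrix `A_s` viewed as an `N × N` matrix, `N = 2^S·M`, with the rows and
columns ordered consistently with the Kronecker (row-major) structure. -/
noncomputable def Amat (S M s : ℕ) : Matrix (Fin (2^S * M)) (Fin (2^S * M)) ℝ :=
  if h : 1 ≤ s ∧ s ≤ S then
    Matrix.reindex
      ((aEquiv (2^(S-s)) 2 (2^(s-1)) M).trans (finCongr (size_eq S s M h.1 h.2)))
      ((aEquiv (2^(S-s)) 2 (2^(s-1)) M).trans (finCongr (size_eq S s M h.1 h.2)))
      (Akron S M s)
  else 0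

lemma size_eqB (S s : ℕ) (h1 : 1 ≤ s) (h2 : s ≤ S) :
    2^(S-s) * 2 * 2^(s-1) = 2^S := by
  have := size_eq S s 1 h1 h2
  simpa using this

/-- The matrix `B_s := I_{2^{S-s}} ⊗ (1/2)J_2 ⊗ I_{2^{s-1}}` viewed as an
`m × m` matrix, `m = 2^S`. -/
noncomputable def Bmat (S s : ℕ) : Matrix (Fin (2^S)) (Fin (2^S)) ℝ :=
  if h : 1 ≤ s ∧ s ≤ S then
    Matrix.reindex
      ((bEquiv (2^(S-s)) 2 (2^(s-1))).trans (finCongr (size_eqB S s h.1 h.2)))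
      ((bEquiv (2^(S-s)) 2 (2^(s-1))).trans (finCongr (size_eqB S s h.1 h.2)))
      (((1 : Matrix (Fin (2^(S-s))) (Fin (2^(S-s))) ℝ) ⊗ₖ ((1/2 : ℝ) • J 2)) ⊗ₖ
        (1 : Matrix (Fin (2^(s-1))) (Fin (2^(s-1))) ℝ))
  else 0

lemma size_eqC (S k M : ℕ) (h : k ≤ S) : 2^(S-k) * 2^k * M = 2^S * M := by
  have hS : S - k + k = S := by omega
  rw [← pow_add, hS]

/-- The matrix `I_{2^{S-k}} ⊗ (1/2^k)J_{2^k} ⊗ (1/M)J_M` viewed as an `N × N`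
matrix, `N = 2^S·M`. -/
noncomputable def Cmat (S M k : ℕ) : Matrix (Fin (2^S * M)) (Fin (2^S * M)) ℝ :=
  if h : k ≤ S then
    Matrix.reindex
      ((bEquiv (2^(S-k)) (2^k) M).trans (finCongr (size_eqC S k M h)))
      ((bEquiv (2^(S-k)) (2^k) M).trans (finCongr (size_eqC S k M h)))
      (((1 : Matrix (Fin (2^(S-k))) (Fin (2^(S-k))) ℝ) ⊗ₖ ((1/(2^k : ℝ)) • J (2^k))) ⊗ₖ
        ((1/(M:ℝ)) • J M))
  else 0

noncomputable def avgMatrix (𝕜 ι : Type*) [Field 𝕜] [Fintype ι] : Matrix ι ι 𝕜 :=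
  of fun _ _ => (Fintype.card ι : 𝕜)⁻¹

section avgMatrix

variable {𝕜 ι κ : Type*} [Field 𝕜] [Fintype ι] [Fintype κ]

@[simp]
lemma avgMatrix_apply (i j : ι) : avgMatrix 𝕜 ι i j = (Fintype.card ι : 𝕜)⁻¹ := rfl

lemma avgMatrix_mul_self [CharZero 𝕜] : avgMatrix 𝕜 ι * avgMatrix 𝕜 ι = avgMatrix 𝕜 ι := by
  ext i j
  have : Nonempty ι := ⟨i⟩
  have : (Fintype.card ι : 𝕜) ≠ 0 := Nat.cast_ne_zero.mpr Fintype.card_ne_zero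
  simp [mul_apply]

lemma avgMatrix_kronecker_avgMatrix :
    avgMatrix 𝕜 ι ⊗ₖ avgMatrix 𝕜 κ = avgMatrix 𝕜 (ι × κ) := by
  ext ⟨i, k⟩ ⟨j, l⟩
  simp [mul_comm]

lemma reindex_avgMatrix (e : ι ≃ κ) : reindex e e (avgMatrix 𝕜 ι) = avgMatrix 𝕜 κ := by
  ext i j
  simp [Fintype.card_congr e]

lemma avgMatrix_eq_one [DecidableEq ι] (h : Fintype.card ι = 1) : avgMatrix 𝕜 ι = 1 := by
  ext i j
  obtain rfl : i = j := Fintype.card_le_one_iff.mp h.le i j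
  simp [h]

lemma avgMatrix_fin (n : ℕ) : avgMatrix 𝕜 (Fin n) = of fun _ _ => 1 / (n : 𝕜) := by
  ext i j
  simp

end avgMatrix

lemma smul_J_eq_avgMatrix {c : ℝ} (k : ℕ) (hc : c = (k : ℝ)⁻¹) :
    c • _root_.J k = avgMatrix ℝ (Fin k) := by
  ext i j
  simp [hc, _root_.J]

lemma reindex_eq_reindex_of_trans_eq {R α β γ : Type*} {A : Matrix α α R} {B : Matrix β β R}
    {e₁ : α ≃ γ} {e₂ : β ≃ γ} (f : β ≃ α) (hf : f.trans e₁ = e₂) (hAB : reindex f f B = A) :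
    reindex e₁ e₁ A = reindex e₂ e₂ B := by
  subst hf hAB
  ext i j
  simp

/-- The index order of `Amat S M (k + 1)`, in which `Cmat S M k` and `Cmat S M (k + 1)` are
Kronecker products of the same four factors as well. -/
def flatEquiv (S M k : ℕ) (hk : k + 1 ≤ S) :
    ((Fin (2 ^ (S - (k + 1))) × Fin 2) × Fin (2 ^ k)) × Fin M ≃ Fin (2 ^ S * M) :=
  (aEquiv _ 2 (2 ^ k) M).trans (finCongr (size_eq S (k + 1) M (Nat.le_add_left 1 k) hk))

section Cmat

variable {S M k : ℕ}

lemma Amat_succ_eq_reindex (hk : k + 1 ≤ S) :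
    Amat S M (k + 1) = reindex (flatEquiv S M k hk) (flatEquiv S M k hk)
      ((((1 : Matrix _ _ ℝ) ⊗ₖ avgMatrix ℝ (Fin 2)) ⊗ₖ 1) ⊗ₖ avgMatrix ℝ (Fin M)) := by
  rw [Amat, dif_pos ⟨Nat.le_add_left 1 k, hk⟩, Akron,
    smul_J_eq_avgMatrix 2 (by norm_num), smul_J_eq_avgMatrix M (one_div _)]
  rfl

lemma Cmat_eq_reindex (hk : k + 1 ≤ S) :
    Cmat S M k = reindex (flatEquiv S M k hk) (flatEquiv S M k hk)
      ((((1 : Matrix _ _ ℝ) ⊗ₖ (1 : Matrix (Fin 2) (Fin 2) ℝ)) ⊗ₖ avgMatrix ℝ (Fin (2 ^ k))) ⊗ₖ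
        avgMatrix ℝ (Fin M)) := by
  have hpow : 2 ^ (S - (k + 1)) * 2 = 2 ^ (S - k) := by rw [← pow_succ]; congr 1; omega
  rw [Cmat, dif_pos (by omega), smul_J_eq_avgMatrix (2 ^ k) (by simp),
    smul_J_eq_avgMatrix M (one_div _)]
  refine reindex_eq_reindex_of_trans_eq
    (((finProdFinEquiv.trans (finCongr hpow)).prodCongr (Equiv.refl _)).prodCongr (Equiv.refl _))
    ?_ ?_
  · ext ⟨⟨⟨p, b⟩, r⟩, d⟩
    simp [flatEquiv, aEquiv, bEquiv, finProdFinEquiv]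
  · rw [← kroneckerMap_reindex_left, ← kroneckerMap_reindex_left, one_kronecker_one,
      reindex_apply, submatrix_one_equiv]

lemma Cmat_succ_eq_reindex (hk : k + 1 ≤ S) :
    Cmat S M (k + 1) = reindex (flatEquiv S M k hk) (flatEquiv S M k hk)
      ((((1 : Matrix _ _ ℝ) ⊗ₖ avgMatrix ℝ (Fin 2)) ⊗ₖ avgMatrix ℝ (Fin (2 ^ k))) ⊗ₖ
        avgMatrix ℝ (Fin M)) := by
  have hpow : 2 * 2 ^ k = 2 ^ (k + 1) := by ring
  rw [Cmat, dif_pos hk, smul_J_eq_avgMatrix (2 ^ (k + 1)) (by simp),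
    smul_J_eq_avgMatrix M (one_div _)]
  refine reindex_eq_reindex_of_trans_eq
    (((Equiv.prodAssoc _ _ _).trans
      ((Equiv.refl _).prodCongr (finProdFinEquiv.trans (finCongr hpow)))).prodCongr (Equiv.refl _))
    ?_ ?_
  · ext ⟨⟨⟨p, b⟩, r⟩, d⟩
    simp only [flatEquiv, aEquiv, bEquiv, finProdFinEquiv, Equiv.trans_apply,
      Equiv.prodCongr_apply, Prod.map_apply, Equiv.coe_refl, id_eq, Equiv.prodAssoc_apply,
      Equiv.coe_fn_mk, finCongr_apply, Fin.val_cast]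
    ring
  · ext ⟨⟨p, i⟩, d⟩ ⟨⟨q, j⟩, e⟩
    simp [one_apply, pow_succ, mul_comm]

lemma Amat_succ_mul_Cmat (hk : k + 1 ≤ S) :
    Amat S M (k + 1) * Cmat S M k = Cmat S M (k + 1) := by
  rw [Amat_succ_eq_reindex hk, Cmat_eq_reindex hk, Cmat_succ_eq_reindex hk]
  simp only [reindex_apply, submatrix_mul_equiv, ← mul_kronecker_mul, mul_one, one_mul,
    avgMatrix_mul_self]

lemma Amat_one_eq_Cmat_one (hS : 1 ≤ S) : Amat S M 1 = Cmat S M 1 := by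
  rw [Amat_succ_eq_reindex hS, Cmat_succ_eq_reindex hS,
    avgMatrix_eq_one (ι := Fin (2 ^ 0)) (by simp)]

lemma Cmat_self : Cmat S M S = avgMatrix ℝ (Fin (2 ^ S * M)) := by
  rw [Cmat, dif_pos le_rfl, smul_J_eq_avgMatrix (2 ^ S) (by simp),
    smul_J_eq_avgMatrix M (one_div _), ← avgMatrix_eq_one (ι := Fin (2 ^ (S - S))) (by simp),
    avgMatrix_kronecker_avgMatrix, avgMatrix_kronecker_avgMatrix, reindex_avgMatrix]

lemma prod_Amat_eq_Cmat (hk : 1 ≤ k) (hkS : k ≤ S) :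
    (List.ofFn fun t : Fin k => Amat S M (k - t)).prod = Cmat S M k := by
  induction k, hk using Nat.le_induction with
  | base => simpa using Amat_one_eq_Cmat_one hkS
  | succ k hk ih =>
    rw [List.ofFn_succ, List.prod_cons]
    simp only [Fin.val_zero, Nat.sub_zero, Fin.val_succ, Nat.add_sub_add_right]
    rw [ih (by omega), Amat_succ_mul_Cmat hkS]

end Cmat

theorem stmt5_general (S M : ℕ) (hS : 0 < S) :
    (List.ofFn (fun t : Fin S => Amat S M (S - (t : ℕ)))).prod =
      Matrix.of (fun (_ _ : Fin (2^S * M)) => 1 / ((2^S * M : ℕ) : ℝ)) := by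
  rw [prod_Amat_eq_Cmat hS le_rfl, Cmat_self, avgMatrix_fin]

/-- the ordered product `A_S · A_{S-1} ⋯ A_1` equals the `N × N`
matrix all of whose entries are `1/N`, where `N = 2^S·M`. -/
theorem stmt5 (S M : ℕ) (hS : 0 < S) (hM : 0 < M) :
    (List.ofFn (fun t : Fin S => Amat S M (S - (t : ℕ)))).prod =
      Matrix.of (fun (_ _ : Fin (2^S * M)) => 1 / ((2^S * M : ℕ) : ℝ)) :=
  stmt5_general S M hS
end

section
/- (Conditional unbiasedness of the mutation step / L^r bound.) Let ζ̂^1,...,ζ̂^N be X-valued random variables and, conditionally on them, let ζ^1,...,ζ^N be independent with ζ^i ~ f(ζ̂^i, ·) for a Markov kernel f. Then for any bounded measurable φ with ‖φ‖ ≤ 1 and any r ≥ 1, E[ | (1/N)Σ_i φ(ζ^i) − (1/N)Σ_i f(φ)(ζ̂^i) |^r ]^{1/r} ≤ 2 B_r / √N, where f(φ)(x) := ∫ φ(y) f(x, dy) and B_r is the BDG constant. -/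
/-!
Write `D i = φ (ζ i) - f φ (ζ̂ i)` with `f φ x = ∫ φ d(f x)`. Given `ζ̂`, the `D i` are
independent and centred, so a mixed moment `E ∏ D i ^ m i` vanishes as soon as some `m i = 1`;
expanding each `D i ^ m i` binomially reduces this to the defining property of the sample, applied
to powers of `φ`. In the expansion of `E (∑ D i) ^ 2k` over maps `g : Fin 2k → Fin N` only the maps
without a singleton fibre survive. They take at most `k` values, so there are at most `N ^ k k ^ 2k`
of them, and each contributes at most `2 ^ 2k`. Hence `‖N⁻¹ ∑ D i‖_{2k} ≤ 2k / √N`, and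
monotonicity of `L^p` norms on a probability space gives the bound with `B_r = k = ⌈r⌉`.
-/

open MeasureTheory ProbabilityTheory Finset

section Bounds

variable {ι Ω : Type*} [Fintype ι] {mΩ : MeasurableSpace Ω} {μ : Measure Ω}

theorem abs_prod_le_prod_of_abs_le {u C : ι → ℝ} (h : ∀ i, |u i| ≤ C i) :
    |∏ i, u i| ≤ ∏ i, C i := by
  rw [abs_prod]
  exact prod_le_prod (fun i _ => abs_nonneg _) fun i _ => h i

theorem integrable_prod_of_abs_le [IsFiniteMeasure μ] {u : ι → Ω → ℝ}
    (hu : ∀ i, Measurable (u i)) {C : ι → ℝ} (hC : ∀ i ω, |u i ω| ≤ C i) :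
    Integrable (fun ω => ∏ i, u i ω) μ :=
  .of_bound (Finset.measurable_prod _ fun i _ => hu i).aestronglyMeasurable _
    (ae_of_all _ fun ω => abs_prod_le_prod_of_abs_le fun i => hC i ω)

theorem abs_integral_le_of_abs_le [IsProbabilityMeasure μ] {F : Ω → ℝ} {C : ℝ}
    (h : ∀ ω, |F ω| ≤ C) : |∫ ω, F ω ∂μ| ≤ C := by
  simpa using norm_integral_le_of_norm_le_const (μ := μ) (f := F) (ae_of_all _ h)

end Bounds

theorem integral_mul_eq_of_condExp_eq {Ω : Type*} {G mΩ : MeasurableSpace Ω} {μ : Measure Ω}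
    [IsFiniteMeasure μ] (hG : G ≤ mΩ) {W H K : Ω → ℝ} (hW : StronglyMeasurable[G] W) {C : ℝ}
    (hWC : ∀ ω, |W ω| ≤ C) (hH : Integrable H μ) (hHK : μ[H | G] =ᵐ[μ] K) :
    ∫ ω, W ω * H ω ∂μ = ∫ ω, W ω * K ω ∂μ := by
  have : IsFiniteMeasure (μ.trim hG) := isFiniteMeasure_trim hG
  have hWH : Integrable (fun ω => W ω * H ω) μ :=
    hH.bdd_mul (hW.mono hG).aestronglyMeasurable (ae_of_all _ hWC)
  calc ∫ ω, W ω * H ω ∂μ = ∫ ω, (μ[W * H | G]) ω ∂μ := (integral_condExp hG).symm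
    _ = ∫ ω, W ω * (μ[H | G]) ω ∂μ :=
        integral_congr_ae (condExp_mul_of_stronglyMeasurable_left hW hWH hH)
    _ = ∫ ω, W ω * K ω ∂μ := integral_congr_ae (hHK.mono fun ω hω => congrArg (W ω * ·) hω)

section Combinatorics

variable {β α : Type*} [Fintype β] [DecidableEq α]

theorem sum_pow_eq_sum_prod_pow_card_fiber [Fintype α] {R : Type*} [CommSemiring R]
    (x : α → R) (n : ℕ) :
    (∑ a, x a) ^ n = ∑ g : Fin n → α, ∏ a, x a ^ #{j | g j = a} := by
  rw [sum_pow', Fintype.piFinset_univ]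
  refine sum_congr rfl fun g _ => ?_
  rw [prod_comp]
  refine prod_subset (subset_univ _) fun a _ ha => ?_
  have : #{j | g j = a} = 0 := card_eq_zero.2 <| filter_eq_empty_iff.2 fun j _ hj =>
    ha (hj ▸ mem_image_of_mem g (mem_univ j))
  rw [this, pow_zero]

theorem two_mul_card_image_le_of_card_fiber_ne_one (g : β → α)
    (hg : ∀ a, #{j | g j = a} ≠ 1) : 2 * #(univ.image g) ≤ Fintype.card β := by
  calc 2 * #(univ.image g) = ∑ _a ∈ univ.image g, 2 := by rw [sum_const, smul_eq_mul, mul_comm]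
    _ ≤ ∑ a ∈ univ.image g, #{j | g j = a} := sum_le_sum fun a ha => by
        obtain ⟨j, -, rfl⟩ := mem_image.1 ha
        have : 0 < #{i | g i = g j} := card_pos.2 ⟨j, by simp⟩
        have := hg (g j)
        omega
    _ = Fintype.card β :=
        (card_eq_sum_card_fiberwise fun j _ => mem_image_of_mem g (mem_univ j)).symm

theorem card_filter_card_image_le [Fintype α] [Nonempty α] [DecidableEq β] (k : ℕ) :
    #{g : β → α | #(univ.image g) ≤ k} ≤ Fintype.card α ^ k * k ^ Fintype.card β := by
  have hsurj : ({g : β → α | #(univ.image g) ≤ k} : Finset _) ⊆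
      univ.image fun p : (Fin k → α) × (β → Fin k) => p.1 ∘ p.2 := by
    intro g hg
    set s := univ.image g
    have hs : #s ≤ k := (mem_filter.1 hg).2
    let e : Fin k → α := fun i =>
      if h : (i : ℕ) < #s then s.equivFin.symm ⟨i, h⟩ else Classical.arbitrary α
    let c : β → Fin k := fun j => Fin.castLE hs (s.equivFin ⟨g j, mem_image_of_mem g (mem_univ j)⟩)
    refine mem_image.2 ⟨(e, c), mem_univ _, funext fun j => ?_⟩
    simp [e, c]
  calc _ ≤ _ := card_le_card hsurj
    _ ≤ _ := card_image_le
    _ = _ := by simp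

end Combinatorics

theorem integral_sum_pow_le_of_integral_prod_pow_eq_zero {ι Ω : Type*} [Fintype ι] [Nonempty ι]
    {mΩ : MeasurableSpace Ω} {μ : Measure Ω} [IsProbabilityMeasure μ] {D : ι → Ω → ℝ}
    (hD : ∀ i, Measurable (D i)) {c : ℝ} (hDc : ∀ i ω, |D i ω| ≤ c)
    (h0 : ∀ m : ι → ℕ, (∃ i, m i = 1) → ∫ ω, ∏ i, D i ω ^ m i ∂μ = 0) (k : ℕ) :
    ∫ ω, (∑ i, D i ω) ^ (2 * k) ∂μ ≤ Fintype.card ι ^ k * (k * c) ^ (2 * k) := by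
  classical
  have hc : 0 ≤ c ^ (2 * k) := (even_two_mul k).pow_nonneg c
  have hDpow (i : ι) (n : ℕ) (ω : Ω) : |D i ω ^ n| ≤ c ^ n :=
    (abs_pow _ _).trans_le (pow_le_pow_left₀ (abs_nonneg _) (hDc i ω) _)
  have hterm (g : Fin (2 * k) → ι) :
      ∫ ω, ∏ i, D i ω ^ #{j | g j = i} ∂μ ≤ if #(univ.image g) ≤ k then c ^ (2 * k) else 0 := by
    by_cases hg : ∃ i, #{j | g j = i} = 1
    · rw [h0 _ hg]
      split_ifs <;> simp [hc]
    · simp only [not_exists] at hg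
      have := two_mul_card_image_le_of_card_fiber_ne_one g hg
      rw [Fintype.card_fin] at this
      rw [if_pos (by omega)]
      refine (le_abs_self _).trans (abs_integral_le_of_abs_le fun ω => ?_)
      calc |∏ i, D i ω ^ #{j | g j = i}| ≤ ∏ i, c ^ #{j | g j = i} :=
            abs_prod_le_prod_of_abs_le fun i => hDpow i _ ω
        _ = c ^ (2 * k) := by
            rw [prod_pow_eq_pow_sum, ← card_eq_sum_card_fiberwise fun j _ => mem_univ (g j)]
            simp
  calc ∫ ω, (∑ i, D i ω) ^ (2 * k) ∂μ
      = ∑ g : Fin (2 * k) → ι, ∫ ω, ∏ i, D i ω ^ #{j | g j = i} ∂μ := by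
        simp_rw [sum_pow_eq_sum_prod_pow_card_fiber]
        exact integral_finsetSum _ fun g _ => integrable_prod_of_abs_le
          (fun i => (hD i).pow_const _) fun i => hDpow i _
    _ ≤ ∑ g : Fin (2 * k) → ι, if #(univ.image g) ≤ k then c ^ (2 * k) else 0 :=
        sum_le_sum fun g _ => hterm g
    _ = #{g : Fin (2 * k) → ι | #(univ.image g) ≤ k} * c ^ (2 * k) := by
        rw [← sum_filter, sum_const, nsmul_eq_mul]
    _ ≤ (Fintype.card ι ^ k * k ^ (2 * k) : ℕ) * c ^ (2 * k) := by
        refine mul_le_mul_of_nonneg_right ?_ hc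
        exact_mod_cast by simpa using card_filter_card_image_le (α := ι) (β := Fin (2 * k)) k
    _ = Fintype.card ι ^ k * (k * c) ^ (2 * k) := by push_cast; ring

section KernelSample

variable {ι Ω X Y : Type*} [Fintype ι] {mΩ : MeasurableSpace Ω} {mX : MeasurableSpace X}
  {mY : MeasurableSpace Y} {μ : Measure Ω} {f : Kernel X Y} {ζhat : ι → Ω → X} {ζ : ι → Ω → Y}

/-- Given `σ(ζhat)`, the `ζ i` are independent with laws `f (ζhat i)`; this is tested on products of
bounded measurable functions. -/
def IsCondKernelSample (μ : Measure Ω) (f : Kernel X Y) (ζhat : ι → Ω → X) (ζ : ι → Ω → Y) :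
    Prop :=
  ∀ h : ι → Y → ℝ, (∀ i, Measurable (h i)) → (∀ i, ∃ C, ∀ y, |h i y| ≤ C) →
    μ[(fun ω => ∏ i, h i (ζ i ω)) | MeasurableSpace.comap (fun ω i => ζhat i ω) MeasurableSpace.pi]
      =ᵐ[μ] fun ω => ∏ i, ∫ y, h i y ∂(f (ζhat i ω))

theorem IsCondKernelSample.integral_mul_prod [IsFiniteMeasure μ]
    (hs : IsCondKernelSample μ f ζhat ζ) (hζhat : ∀ i, Measurable (ζhat i))
    (hζ : ∀ i, Measurable (ζ i)) {w : (ι → X) → ℝ} (hw : Measurable w) {Cw : ℝ}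
    (hwC : ∀ x, |w x| ≤ Cw) {h : ι → Y → ℝ} (hh : ∀ i, Measurable (h i)) {C : ι → ℝ}
    (hC : ∀ i y, |h i y| ≤ C i) :
    ∫ ω, w (fun i => ζhat i ω) * ∏ i, h i (ζ i ω) ∂μ
      = ∫ ω, w (fun i => ζhat i ω) * ∏ i, ∫ y, h i y ∂(f (ζhat i ω)) ∂μ :=
  integral_mul_eq_of_condExp_eq (measurable_pi_lambda _ fun i => hζhat i).comap_le
    (hw.comp (Measurable.of_comap_le le_rfl)).stronglyMeasurable (fun _ => hwC _)
    (integrable_prod_of_abs_le (fun i => (hh i).comp (hζ i)) fun i _ => hC i _)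
    (hs h hh fun i => ⟨C i, hC i⟩)

theorem IsCondKernelSample.integral_prod_sum_mul [IsFiniteMeasure μ] [IsMarkovKernel f]
    (hs : IsCondKernelSample μ f ζhat ζ) (hζhat : ∀ i, Measurable (ζhat i))
    (hζ : ∀ i, Measurable (ζ i)) (s : ι → Finset ℕ) {w : ι → ℕ → X → ℝ}
    (hw : ∀ i j, Measurable (w i j)) {Cw : ι → ℕ → ℝ} (hwC : ∀ i j x, |w i j x| ≤ Cw i j)
    {h : ι → ℕ → Y → ℝ} (hh : ∀ i j, Measurable (h i j)) {C : ι → ℕ → ℝ}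
    (hC : ∀ i j y, |h i j y| ≤ C i j) :
    ∫ ω, ∏ i, ∑ j ∈ s i, w i j (ζhat i ω) * h i j (ζ i ω) ∂μ
      = ∫ ω, ∏ i, ∑ j ∈ s i, w i j (ζhat i ω) * ∫ y, h i j y ∂(f (ζhat i ω)) ∂μ := by
  classical
  have hW (g : ι → ℕ) : Measurable fun x : ι → X => ∏ i, w i (g i) (x i) :=
    Finset.measurable_prod _ fun i _ => (hw i (g i)).comp (measurable_pi_apply i)
  have hWC (g : ι → ℕ) (x : ι → X) : |∏ i, w i (g i) (x i)| ≤ ∏ i, Cw i (g i) :=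
    abs_prod_le_prod_of_abs_le fun i => hwC i (g i) (x i)
  have hK (i : ι) (j : ℕ) : Measurable fun x => ∫ y, h i j y ∂(f x) :=
    (hh i j).stronglyMeasurable.integral_kernel.measurable
  have hWζ (g : ι → ℕ) : AEStronglyMeasurable (fun ω => ∏ i, w i (g i) (ζhat i ω)) μ :=
    ((hW g).comp (measurable_pi_lambda _ hζhat)).aestronglyMeasurable
  simp only [prod_univ_sum, prod_mul_distrib]
  rw [integral_finsetSum _ fun g _ => ?_, integral_finsetSum _ fun g _ => ?_]
  · exact sum_congr rfl fun g _ => hs.integral_mul_prod hζhat hζ (hW g) (hWC g)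
      (fun i => hh i (g i)) fun i => hC i (g i)
  · exact (integrable_prod_of_abs_le (fun i => (hK i (g i)).comp (hζhat i))
      fun i _ => abs_integral_le_of_abs_le (hC i (g i))).bdd_mul (hWζ g)
      (ae_of_all _ fun _ => hWC g _)
  · exact (integrable_prod_of_abs_le (fun i => (hh i (g i)).comp (hζ i))
      fun i _ => hC i (g i) _).bdd_mul (hWζ g) (ae_of_all _ fun _ => hWC g _)

theorem IsCondKernelSample.integral_prod_centered_pow_eq_zero [IsFiniteMeasure μ]
    [IsMarkovKernel f] (hs : IsCondKernelSample μ f ζhat ζ) (hζhat : ∀ i, Measurable (ζhat i))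
    (hζ : ∀ i, Measurable (ζ i)) {φ : Y → ℝ} (hφ : Measurable φ) {C : ℝ} (hφC : ∀ y, |φ y| ≤ C)
    {m : ι → ℕ} (hm : ∃ i, m i = 1) :
    ∫ ω, ∏ i, (φ (ζ i ω) - ∫ y, φ y ∂(f (ζhat i ω))) ^ m i ∂μ = 0 := by
  obtain ⟨i₀, hi₀⟩ := hm
  set c : X → ℝ := fun x => ∫ y, φ y ∂(f x) with hc_def
  have hc : Measurable c := hφ.stronglyMeasurable.integral_kernel.measurable
  have hcC (x : X) : |c x| ≤ C := abs_integral_le_of_abs_le hφC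
  -- the binomial coefficients of `(t - c x) ^ m i`, as functions of `x`
  let w (i : ι) (j : ℕ) (x : X) : ℝ := (-1) ^ (j + m i) * c x ^ (m i - j) * (m i).choose j
  have hw (i : ι) (j : ℕ) : Measurable (w i j) := by fun_prop
  have hwC (i : ι) (j : ℕ) (x : X) : |w i j x| ≤ C ^ (m i - j) * (m i).choose j := by
    simp only [w, abs_mul, abs_pow, abs_neg, abs_one, one_pow, one_mul, Nat.abs_cast]
    gcongr
    exact hcC x
  calc ∫ ω, ∏ i, (φ (ζ i ω) - c (ζhat i ω)) ^ m i ∂μ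
      = ∫ ω, ∏ i, ∑ j ∈ range (m i + 1), w i j (ζhat i ω) * φ (ζ i ω) ^ j ∂μ := by
        congr with ω
        refine prod_congr rfl fun i _ => ?_
        rw [sub_pow]
        exact sum_congr rfl fun j _ => by ring
    _ = ∫ ω, ∏ i, ∑ j ∈ range (m i + 1), w i j (ζhat i ω) * ∫ y, φ y ^ j ∂(f (ζhat i ω)) ∂μ :=
        hs.integral_prod_sum_mul hζhat hζ _ hw hwC (fun _ j => hφ.pow_const j)
          (C := fun _ j => C ^ j) fun _ j y => by rw [abs_pow]; gcongr; exact hφC y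
    _ = 0 := by
        refine integral_eq_zero_of_ae (ae_of_all _ fun ω => prod_eq_zero (mem_univ i₀) ?_)
        simp [w, hi₀, sum_range_succ, hc_def]

end KernelSample

section MeanError

variable {Ω X Y : Type*} {mΩ : MeasurableSpace Ω} {mX : MeasurableSpace X}
  {mY : MeasurableSpace Y} {μ : Measure Ω} {f : Kernel X Y} {N : ℕ} {ζhat : Fin N → Ω → X}
  {ζ : Fin N → Ω → Y} {φ : Y → ℝ}

theorem memLp_top_mean_error [IsFiniteMeasure μ] [IsMarkovKernel f]
    (hζhat : ∀ i, Measurable (ζhat i)) (hζ : ∀ i, Measurable (ζ i)) (hφ : Measurable φ)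
    (hφb : ∀ y, |φ y| ≤ 1) :
    MemLp (fun ω => (1 / (N : ℝ)) * ∑ i, φ (ζ i ω)
      - (1 / (N : ℝ)) * ∑ i, ∫ y, φ y ∂(f (ζhat i ω))) ⊤ μ := by
  have hφζ : MemLp (fun ω => ∑ i, φ (ζ i ω)) ⊤ μ :=
    memLp_finsetSum _ fun i _ => memLp_top_of_bound (hφ.comp (hζ i)).aestronglyMeasurable 1
      (ae_of_all _ fun _ => (Real.norm_eq_abs _).trans_le (hφb _))
  have hfφζhat : MemLp (fun ω => ∑ i, ∫ y, φ y ∂(f (ζhat i ω))) ⊤ μ :=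
    memLp_finsetSum _ fun i _ => memLp_top_of_bound
      (hφ.stronglyMeasurable.integral_kernel.measurable.comp (hζhat i)).aestronglyMeasurable 1
      (ae_of_all _ fun _ => (Real.norm_eq_abs _).trans_le (abs_integral_le_of_abs_le hφb))
  exact (hφζ.const_mul _).sub (hfφζhat.const_mul _)

theorem IsCondKernelSample.integral_mean_error_pow_le (hN : 0 < N)
    [IsProbabilityMeasure μ] [IsMarkovKernel f]
    (hs : IsCondKernelSample μ f ζhat ζ) (hζhat : ∀ i, Measurable (ζhat i))
    (hζ : ∀ i, Measurable (ζ i)) (hφ : Measurable φ) (hφb : ∀ y, |φ y| ≤ 1) (k : ℕ) :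
    ∫ ω, ((1 / (N : ℝ)) * ∑ i, φ (ζ i ω) - (1 / (N : ℝ)) * ∑ i, ∫ y, φ y ∂(f (ζhat i ω)))
        ^ (2 * k) ∂μ ≤ (2 * k / √N) ^ (2 * k) := by
  have : Nonempty (Fin N) := ⟨⟨0, hN⟩⟩
  set D : Fin N → Ω → ℝ := fun i ω => φ (ζ i ω) - ∫ y, φ y ∂(f (ζhat i ω))
  have hD (i : Fin N) : Measurable (D i) :=
    (hφ.comp (hζ i)).sub (hφ.stronglyMeasurable.integral_kernel.measurable.comp (hζhat i))
  have hD2 (i : Fin N) (ω : Ω) : |D i ω| ≤ 2 := by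
    have := abs_integral_le_of_abs_le (μ := f (ζhat i ω)) hφb
    linarith [abs_sub (φ (ζ i ω)) (∫ y, φ y ∂(f (ζhat i ω))), hφb (ζ i ω)]
  have hmoment := integral_sum_pow_le_of_integral_prod_pow_eq_zero hD hD2
    (fun _ hm => hs.integral_prod_centered_pow_eq_zero hζhat hζ hφ hφb hm) k
  have hNpos : (0 : ℝ) < N := by exact_mod_cast hN
  calc _ = ∫ ω, (1 / (N : ℝ)) ^ (2 * k) * (∑ i, D i ω) ^ (2 * k) ∂μ := by
        congr with ω
        rw [← mul_pow, mul_sum, mul_sum, mul_sum, ← sum_sub_distrib]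
        simp only [D, mul_sub]
    _ ≤ (1 / (N : ℝ)) ^ (2 * k) * (N ^ k * (k * 2) ^ (2 * k)) := by
        rw [integral_const_mul]
        gcongr
        simpa using hmoment
    _ = (2 * k / √N) ^ (2 * k) := by
        rw [div_pow (2 * k : ℝ), pow_mul √N, Real.sq_sqrt hNpos.le, one_div, inv_pow,
          pow_mul (N : ℝ) 2, sq]
        field_simp
        ring

end MeanError

theorem rpow_integral_abs_rpow_le_of_integral_pow_le {Ω : Type*} {mΩ : MeasurableSpace Ω}
    {μ : Measure Ω} [IsProbabilityMeasure μ] {S : Ω → ℝ} (hS : MemLp S ⊤ μ) {r : ℝ} (hr : 0 < r)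
    {n : ℕ} (hrn : r ≤ 2 * n) {a : ℝ} (ha : 0 ≤ a) (hSa : ∫ ω, S ω ^ (2 * n) ∂μ ≤ a ^ (2 * n)) :
    (∫ ω, |S ω| ^ r ∂μ) ^ (1 / r) ≤ a := by
  have hn : 2 * n ≠ 0 := by exact_mod_cast (hr.trans_le hrn).ne'
  have hSn (ω : Ω) : |S ω| ^ ((2 * n : ℕ) : ℝ) = S ω ^ (2 * n) := by
    rw [Real.rpow_natCast, pow_abs, abs_of_nonneg ((even_two_mul n).pow_nonneg _)]
  have hmono := eLpNorm_le_eLpNorm_of_exponent_le (μ := μ)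
    (show ENNReal.ofReal r ≤ ((2 * n : ℕ) : ENNReal) by
      rw [← ENNReal.ofReal_natCast]; exact ENNReal.ofReal_le_ofReal (by exact_mod_cast hrn))
    hS.aestronglyMeasurable
  rw [(hS.mono_exponent le_top).eLpNorm_eq_integral_rpow_norm (by simpa using hr)
      ENNReal.ofReal_ne_top,
    (hS.mono_exponent le_top).eLpNorm_eq_integral_rpow_norm (by simpa using hn)
      (ENNReal.natCast_ne_top _),
    ENNReal.ofReal_le_ofReal_iff (by positivity), ENNReal.toReal_ofReal hr.le,
    ENNReal.toReal_natCast] at hmono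
  simp only [Real.norm_eq_abs, hSn] at hmono
  calc (∫ ω, |S ω| ^ r ∂μ) ^ (1 / r) ≤ (∫ ω, S ω ^ (2 * n) ∂μ) ^ ((2 * n : ℕ) : ℝ)⁻¹ := by
        rwa [one_div]
    _ ≤ (a ^ (2 * n)) ^ ((2 * n : ℕ) : ℝ)⁻¹ := by
        gcongr
        exact integral_nonneg fun ω => (even_two_mul n).pow_nonneg _
    _ = a := Real.pow_rpow_inv_natCast ha hn

/-- conditional unbiasedness / `L^r` bound for the mutation step.
Conditionally on `ζ̂`, the particles `ζ^i` are independent with `ζ^i ~ f(ζ̂^i,·)`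
(encoded through the conditional expectation of products of bounded measurable
functions given `σ(ζ̂)`). Then for bounded `‖φ‖ ≤ 1`,
`E[|N⁻¹Σφ(ζ^i) − N⁻¹Σ f(φ)(ζ̂^i)|^r]^{1/r} ≤ 2B_r/√N`,
with `B_r` depending only on `r`. -/
theorem stmt17 (r : ℝ) (hr : 1 ≤ r) :
    ∃ B : ℝ, ∀ (N : ℕ), 0 < N →
      ∀ (Ω : Type) (m0 : MeasurableSpace Ω) (μ : Measure Ω), IsProbabilityMeasure μ →
      ∀ (X : Type) (mX : MeasurableSpace X) (f : Kernel X X), IsMarkovKernel f →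
      ∀ (ζhat ζ : Fin N → Ω → X),
      (∀ i, Measurable (ζhat i)) → (∀ i, Measurable (ζ i)) →
      (∀ h : Fin N → X → ℝ, (∀ i, Measurable (h i)) → (∀ i, ∃ C, ∀ x, |h i x| ≤ C) →
        μ[(fun ω => ∏ i, h i (ζ i ω)) |
            MeasurableSpace.comap (fun ω (i : Fin N) => ζhat i ω) MeasurableSpace.pi]
          =ᵐ[μ] fun ω => ∏ i, ∫ y, h i y ∂(f (ζhat i ω))) →
      ∀ φ : X → ℝ, Measurable φ → (∀ x, |φ x| ≤ 1) →
      (∫ ω, |(1 / (N : ℝ)) * ∑ i, φ (ζ i ω)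
          - (1 / (N : ℝ)) * ∑ i, ∫ y, φ y ∂(f (ζhat i ω))| ^ r ∂μ) ^ (1 / r)
        ≤ 2 * B / Real.sqrt N := by
  refine ⟨⌈r⌉₊, fun N hN Ω _ μ _ X _ f _ ζhat ζ hζhat hζ hs φ hφ hφb => ?_⟩
  have hr0 : 0 < r := by linarith
  calc _ ≤ 2 * ⌈r⌉₊ / √N :=
        rpow_integral_abs_rpow_le_of_integral_pow_le
          (memLp_top_mean_error hζhat hζ hφ hφb) hr0
          (by linarith [Nat.le_ceil r, (Nat.cast_nonneg ⌈r⌉₊ : (0 : ℝ) ≤ _)]) (by positivity)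
          (IsCondKernelSample.integral_mean_error_pow_le hN hs hζhat hζ hφ hφb _)
    _ = _ := by ring
end
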